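/- Fix (a₀,a₁) ∈ ℂ²∖{0}, let L be the ruling line of points of P¹×P¹ with first coordinate [a₀:a₁], and let q be a point of P¹×P¹ not lying on L. Then the set of forms f ∈ V that are singular at every point of L and also singular at q is a complex linear subspace of V of dimension 5 (codimension 11). -/

import Mathlib

open MvPolynomial

noncomputable section

/-- The polynomial ring `ℂ[x₀, x₁, y₀, y₁]`, with variables indexed by `Fin 4`:
`x₀ = X 0`, `x₁ = X 1`, `y₀ = X 2`, `y₁ = X 3`. -/
abbrev P4 : Type := MvPolynomial (Fin 4) ℂ

/-- Weights picking out the degree in the variables `x₀, x₁`. -/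
def wx : Fin 4 → ℕ := ![1, 1, 0, 0]

/-- Weights picking out the degree in the variables `y₀, y₁`. -/
def wy : Fin 4 → ℕ := ![0, 0, 1, 1]

/-- The 16-dimensional space `V` of bihomogeneous forms of bidegree `(3,3)`. -/
def V33 : Submodule ℂ P4 :=
  weightedHomogeneousSubmodule ℂ wx 3 ⊓ weightedHomogeneousSubmodule ℂ wy 3

/-- A form `f` is singular at the point with representative `p ∈ ℂ⁴` if all four partial
derivatives of `f` vanish at `p`. -/
def SingularAt (f : P4) (p : Fin 4 → ℂ) : Prop :=
  ∀ i : Fin 4, eval p (pderiv i f) = 0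

/-- `p : ℂ⁴` is a valid representative of a point of `P¹ × P¹`. -/
def IsRep (p : Fin 4 → ℂ) : Prop :=
  ¬(p 0 = 0 ∧ p 1 = 0) ∧ ¬(p 2 = 0 ∧ p 3 = 0)

/-- Two representatives define the same point of `P¹ × P¹` iff their `(a₀,a₁)`-parts are
proportional and their `(b₀,b₁)`-parts are proportional. -/
def SamePoint (p q : Fin 4 → ℂ) : Prop :=
  (∃ l : ℂˣ, q 0 = l * p 0 ∧ q 1 = l * p 1) ∧ (∃ m : ℂˣ, q 2 = m * p 2 ∧ q 3 = m * p 3)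

/-! A block-diagonal linear change of coordinates `(x, y) ↦ (A x, B y)` preserves the bidegree
and moves singular points along with it, so we may assume that the line is `x₁ = 0` and that
`q = ([0 : 1], [1 : 0])`. Writing `f = ∑ cᵢⱼ x₀^(3-i) x₁^i y₀^(3-j) y₁^j`, singularity along
`x₁ = 0` says that the binary cubics `∑ⱼ c₀ⱼ y₀^(3-j) y₁^j` and `∑ⱼ c₁ⱼ y₀^(3-j) y₁^j` vanish
identically, and singularity at `q` kills `c₂₀`, `c₃₀` and `c₃₁`. The five monomials that are
left span the space. -/

open scoped Matrix

namespace MvPolynomial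

section LinearSubstitution

variable {σ τ R : Type*} [CommRing R]

lemma pderiv_aeval [Fintype σ] [DecidableEq σ] (g : σ → MvPolynomial τ R) (i : τ)
    (f : MvPolynomial σ R) :
    pderiv i (aeval g f) = ∑ j, aeval g (pderiv j f) * pderiv i (g j) := by
  induction f using MvPolynomial.induction_on with
  | C a => simp
  | add p q hp hq => simp only [map_add, hp, hq, add_mul, Finset.sum_add_distrib]
  | mul_X p j hp =>
    simp only [map_mul, aeval_X, Derivation.leibniz, hp, pderiv_X, smul_eq_mul, Pi.single_apply,
      mul_ite, mul_one, mul_zero, map_add, add_mul, Finset.sum_add_distrib, Finset.mul_sum,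
      apply_ite (aeval g), map_zero, ite_mul, zero_mul, Finset.sum_ite_eq, Finset.mem_univ,
      if_true, mul_assoc]

lemma IsWeightedHomogeneous.aeval {M : Type*} [AddCommMonoid M] {w : σ → M} {w' : τ → M}
    {g : σ → MvPolynomial τ R} (hg : ∀ i, (g i).IsWeightedHomogeneous w' (w i))
    {f : MvPolynomial σ R} {n : M} (hf : f.IsWeightedHomogeneous w n) :
    (aeval g f).IsWeightedHomogeneous w' n := by
  induction hf using IsWeightedHomogeneous.induction_on with
  | zero => simpa using isWeightedHomogeneous_zero R w' n
  | add p q _ _ hp hq => simpa using hp.add hq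
  | monomial d r hr =>
    rw [aeval_monomial, algebraMap_eq, Finsupp.prod, ← hr, Finsupp.weight_apply, Finsupp.sum]
    simpa using ((isWeightedHomogeneous_C w' r).mul
      (IsWeightedHomogeneous.prod _ _ _ fun j _ => (hg j).pow (d j)))

variable [Fintype σ]

def linSubst (M : Matrix σ σ R) : MvPolynomial σ R →ₐ[R] MvPolynomial σ R :=
  aeval fun i => ∑ j, C (M i j) * X j

lemma linSubst_X (M : Matrix σ σ R) (i : σ) : linSubst M (X i) = ∑ j, C (M i j) * X j :=
  aeval_X _ _

lemma linSubst_comp_linSubst (M N : Matrix σ σ R) :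
    (linSubst M).comp (linSubst N) = linSubst (N * M) := by
  refine algHom_ext fun i => ?_
  simp only [AlgHom.comp_apply, linSubst_X, map_sum, map_mul, algHom_C, algebraMap_eq,
    Matrix.mul_apply, Finset.sum_mul, Finset.mul_sum, mul_assoc]
  exact Finset.sum_comm

lemma linSubst_one [DecidableEq σ] : linSubst (1 : Matrix σ σ R) = AlgHom.id R _ := by
  refine algHom_ext fun i => ?_
  simp [linSubst_X, Matrix.one_apply]

def linSubstEquiv [DecidableEq σ] (M : (Matrix σ σ R)ˣ) :
    MvPolynomial σ R ≃ₐ[R] MvPolynomial σ R :=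
  .ofAlgHom (linSubst M) (linSubst ↑M⁻¹)
    (by rw [linSubst_comp_linSubst, Units.inv_mul, linSubst_one])
    (by rw [linSubst_comp_linSubst, Units.mul_inv, linSubst_one])

lemma finrank_comap_linSubst [DecidableEq σ] (M : (Matrix σ σ R)ˣ)
    (S : Submodule R (MvPolynomial σ R)) :
    Module.finrank R (S.comap (linSubst (M : Matrix σ σ R)).toLinearMap) =
      Module.finrank R S := by
  rw [show S.comap (linSubst (M : Matrix σ σ R)).toLinearMap =
      S.map (linSubstEquiv M).toLinearEquiv.symm.toLinearMap from
    Submodule.comap_equiv_eq_map_symm (linSubstEquiv M).toLinearEquiv S]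
  exact LinearEquiv.finrank_map_eq _ _

lemma eval_linSubst (M : Matrix σ σ R) (p : σ → R) (f : MvPolynomial σ R) :
    eval p (linSubst M f) = eval (M *ᵥ p) f := by
  rw [linSubst, aeval_def, algebraMap_eq, ← eval_assoc]
  congr 2
  funext i
  simp [Matrix.mulVec, dotProduct]

lemma pderiv_linSubst [DecidableEq σ] (M : Matrix σ σ R) (i : σ) (f : MvPolynomial σ R) :
    pderiv i (linSubst M f) = ∑ j, linSubst M (pderiv j f) * C (M j i) := by
  rw [linSubst, pderiv_aeval]
  simp [pderiv_X, Pi.single_apply]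

lemma eval_pderiv_linSubst [DecidableEq σ] (M : Matrix σ σ R) (p : σ → R)
    (f : MvPolynomial σ R) :
    (fun i => eval p (pderiv i (linSubst M f))) =
      (fun j => eval (M *ᵥ p) (pderiv j f)) ᵥ* M := by
  ext i
  simp [pderiv_linSubst, eval_linSubst, Matrix.vecMul, dotProduct, mul_comm]

lemma IsWeightedHomogeneous.linSubst {M : Type*} [AddCommMonoid M] {w : σ → M}
    {K : Matrix σ σ R} (hK : ∀ i j, w i ≠ w j → K i j = 0) {f : MvPolynomial σ R} {n : M}
    (hf : f.IsWeightedHomogeneous w n) : (linSubst K f).IsWeightedHomogeneous w n := by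
  refine hf.aeval fun i => IsWeightedHomogeneous.sum _ _ _ fun j _ => ?_
  by_cases hij : w i = w j
  · simpa [hij] using (isWeightedHomogeneous_X R w j).C_mul (K i j)
  · simpa [hK i j hij] using isWeightedHomogeneous_zero R w (w i)

end LinearSubstitution

section SingularSubmodule

variable {σ R : Type*} [CommRing R]

def singularSubmodule (P : Set (σ → R)) : Submodule R (MvPolynomial σ R) :=
  ⨅ p ∈ P, ⨅ i, LinearMap.ker ((aeval p).toLinearMap ∘ₗ (pderiv i).toLinearMap)

lemma mem_singularSubmodule {P : Set (σ → R)} {f : MvPolynomial σ R} :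
    f ∈ singularSubmodule P ↔ ∀ p ∈ P, ∀ i, eval p (pderiv i f) = 0 := by
  simp [singularSubmodule]

lemma comap_linSubst_singularSubmodule [Fintype σ] [DecidableEq σ] (M : (Matrix σ σ R)ˣ)
    (P : Set (σ → R)) :
    (singularSubmodule P).comap (linSubst (M : Matrix σ σ R)).toLinearMap =
      singularSubmodule ((M *ᵥ ·) '' P) := by
  ext f
  simp only [Submodule.mem_comap, mem_singularSubmodule, Set.forall_mem_image,
    AlgHom.toLinearMap_apply]
  refine forall₂_congr fun p _ => ?_
  have h := (Matrix.vecMul_injective_of_isUnit M.isUnit).eq_iff' (a := fun j =>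
    eval (M *ᵥ p) (pderiv j f)) (Matrix.zero_vecMul _)
  rw [← eval_pderiv_linSubst] at h
  simpa only [_root_.funext_iff, Pi.zero_apply] using h

end SingularSubmodule

end MvPolynomial

open MvPolynomial

section Coordinates

variable {R : Type*}

def pt (x y : Fin 2 → R) : Fin 4 → R := ![x 0, x 1, y 0, y 1]

def blockDiagonal₂ [Zero R] (A B : Matrix (Fin 2) (Fin 2) R) : Matrix (Fin 4) (Fin 4) R :=
  !![A 0 0, A 0 1, 0, 0; A 1 0, A 1 1, 0, 0; 0, 0, B 0 0, B 0 1; 0, 0, B 1 0, B 1 1]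

def firstRulingLine [Zero R] (x : Fin 2 → R) : Set (Fin 4 → R) := pt x '' {0}ᶜ

lemma forall_ne_zero_fin_two_iff [Zero R] {P : (Fin 2 → R) → Prop} :
    (∀ y, y ≠ 0 → P y) ↔ ∀ b₀ b₁, ¬(b₀ = 0 ∧ b₁ = 0) → P ![b₀, b₁] := by
  refine ⟨fun h b₀ b₁ hb => h _ (by simpa using hb), fun h y hy => ?_⟩
  have hy' : ![y 0, y 1] = y := by ext i; fin_cases i <;> rfl
  exact hy' ▸ h (y 0) (y 1) fun h0 => hy (hy' ▸ by simp [h0.1, h0.2])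

variable [CommRing R]

lemma blockDiagonal₂_mul (A B A' B' : Matrix (Fin 2) (Fin 2) R) :
    blockDiagonal₂ A B * blockDiagonal₂ A' B' = blockDiagonal₂ (A * A') (B * B') := by
  ext i j
  fin_cases i <;> fin_cases j <;> simp [blockDiagonal₂, Matrix.mul_apply, Fin.sum_univ_succ]

lemma blockDiagonal₂_one : blockDiagonal₂ (1 : Matrix (Fin 2) (Fin 2) R) 1 = 1 := by
  ext i j
  fin_cases i <;> fin_cases j <;> simp [blockDiagonal₂]

lemma blockDiagonal₂_mulVec_pt (A B : Matrix (Fin 2) (Fin 2) R) (x y : Fin 2 → R) :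
    blockDiagonal₂ A B *ᵥ pt x y = pt (A *ᵥ x) (B *ᵥ y) := by
  ext i
  fin_cases i <;> simp [blockDiagonal₂, pt, Matrix.mulVec, dotProduct, Fin.sum_univ_succ]

def blockDiagonal₂Unit (A B : (Matrix (Fin 2) (Fin 2) R)ˣ) : (Matrix (Fin 4) (Fin 4) R)ˣ where
  val := blockDiagonal₂ A B
  inv := blockDiagonal₂ ↑A⁻¹ ↑B⁻¹
  val_inv := by rw [blockDiagonal₂_mul, A.mul_inv, B.mul_inv, blockDiagonal₂_one]
  inv_val := by rw [blockDiagonal₂_mul, A.inv_mul, B.inv_mul, blockDiagonal₂_one]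

@[simp]
lemma coe_blockDiagonal₂Unit (A B : (Matrix (Fin 2) (Fin 2) R)ˣ) :
    (blockDiagonal₂Unit A B : Matrix (Fin 4) (Fin 4) R) = blockDiagonal₂ A B :=
  rfl

lemma image_blockDiagonal₂Unit_firstRulingLine (A B : (Matrix (Fin 2) (Fin 2) R)ˣ)
    (x : Fin 2 → R) :
    ((blockDiagonal₂Unit A B : Matrix (Fin 4) (Fin 4) R) *ᵥ ·) '' firstRulingLine x =
      firstRulingLine ((A : Matrix (Fin 2) (Fin 2) R) *ᵥ x) := by
  have hB : Function.Bijective ((B : Matrix (Fin 2) (Fin 2) R) *ᵥ ·) :=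
    ⟨Matrix.mulVec_injective_of_isUnit B.isUnit, Matrix.mulVec_surjective_iff_isUnit.2 B.isUnit⟩
  have hne : ((B : Matrix (Fin 2) (Fin 2) R) *ᵥ ·) '' {0}ᶜ = {0}ᶜ := by
    rw [Set.image_compl_eq hB, Set.image_singleton, Matrix.mulVec_zero]
  rw [firstRulingLine, firstRulingLine, Set.image_image]
  conv_rhs => rw [← hne, Set.image_image]
  simp only [coe_blockDiagonal₂Unit, blockDiagonal₂_mulVec_pt]

end Coordinates

lemma det_ne_zero_of_not_proportional {K : Type*} [Field K] {a₀ a₁ c₀ c₁ : K}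
    (ha : ¬(a₀ = 0 ∧ a₁ = 0)) (hc : ¬(c₀ = 0 ∧ c₁ = 0))
    (h : ¬∃ l : Kˣ, c₀ = l * a₀ ∧ c₁ = l * a₁) : a₀ * c₁ - c₀ * a₁ ≠ 0 := by
  intro hdet
  apply h
  rcases eq_or_ne a₀ 0 with h₀ | h₀
  · have h₁ : a₁ ≠ 0 := fun h₁ => ha ⟨h₀, h₁⟩
    have hc₀ : c₀ = 0 := by simpa [h₀, h₁] using hdet
    exact ⟨Units.mk0 (c₁ / a₁) (div_ne_zero (fun h => hc ⟨hc₀, h⟩) h₁), by simp [h₀, hc₀],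
      by simp [h₁]⟩
  · have hc₀ : c₀ ≠ 0 := fun hc₀ => hc ⟨hc₀, by simpa [hc₀, h₀] using hdet⟩
    refine ⟨Units.mk0 (c₀ / a₀) (div_ne_zero hc₀ h₀), by simp [h₀], ?_⟩
    rw [Units.val_mk0]
    field_simp
    linear_combination hdet

lemma exists_det_ne_zero {K : Type*} [Field K] {u₀ u₁ : K} (hu : ¬(u₀ = 0 ∧ u₁ = 0)) :
    ∃ v₀ v₁ : K, u₀ * v₁ - v₀ * u₁ ≠ 0 := by
  rcases eq_or_ne u₀ 0 with h₀ | h₀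
  · exact ⟨1, 0, by simpa [h₀] using fun h₁ => hu ⟨h₀, h₁⟩⟩
  · exact ⟨0, 1, by simpa using h₀⟩

section Bidegree

lemma blockDiagonal₂_eq_zero_of_wx_ne {R : Type*} [Zero R] (A B : Matrix (Fin 2) (Fin 2) R)
    {i j : Fin 4} (h : wx i ≠ wx j) : blockDiagonal₂ A B i j = 0 := by
  fin_cases i <;> fin_cases j <;> simp_all [wx, blockDiagonal₂]

lemma blockDiagonal₂_eq_zero_of_wy_ne {R : Type*} [Zero R] (A B : Matrix (Fin 2) (Fin 2) R)
    {i j : Fin 4} (h : wy i ≠ wy j) : blockDiagonal₂ A B i j = 0 := by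
  fin_cases i <;> fin_cases j <;> simp_all [wy, blockDiagonal₂]

lemma linSubst_blockDiagonal₂_mem_V33 (A B : Matrix (Fin 2) (Fin 2) ℂ) {f : P4} (hf : f ∈ V33) :
    linSubst (blockDiagonal₂ A B) f ∈ V33 :=
  ⟨(hf.1 : f.IsWeightedHomogeneous wx 3).linSubst fun _ _ => blockDiagonal₂_eq_zero_of_wx_ne A B,
    (hf.2 : f.IsWeightedHomogeneous wy 3).linSubst fun _ _ => blockDiagonal₂_eq_zero_of_wy_ne A B⟩

lemma comap_linSubst_blockDiagonal₂Unit_V33 (A B : (Matrix (Fin 2) (Fin 2) ℂ)ˣ) :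
    V33.comap (linSubst (blockDiagonal₂Unit A B : Matrix (Fin 4) (Fin 4) ℂ)).toLinearMap = V33 := by
  refine le_antisymm (fun f hf => ?_) fun f => linSubst_blockDiagonal₂_mem_V33 A B
  have hinv : linSubst (blockDiagonal₂ ↑A⁻¹ ↑B⁻¹) (linSubst (blockDiagonal₂ ↑A ↑B) f) = f := by
    rw [← AlgHom.comp_apply, linSubst_comp_linSubst, blockDiagonal₂_mul, A.mul_inv, B.mul_inv,
      blockDiagonal₂_one, linSubst_one, AlgHom.id_apply]
  exact hinv ▸ linSubst_blockDiagonal₂_mem_V33 _ _ hf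

def bidegExp (i j : ℕ) : Fin 4 →₀ ℕ := Finsupp.equivFunOnFinite.symm ![3 - i, i, 3 - j, j]

lemma bidegExp_injective :
    Function.Injective fun ij : Fin 4 × Fin 4 => bidegExp ij.1 ij.2 := by
  rintro ⟨i, j⟩ ⟨i', j'⟩ h
  have h1 := DFunLike.congr_fun h 1
  have h3 := DFunLike.congr_fun h 3
  simp only [bidegExp, Finsupp.equivFunOnFinite_symm_apply_apply] at h1 h3
  simp_all [Fin.ext_iff]

lemma monomial_bidegExp (i j : ℕ) (c : ℂ) :
    monomial (bidegExp i j) c = C c * X 0 ^ (3 - i) * X 1 ^ i * X 2 ^ (3 - j) * X 3 ^ j := by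
  simp only [X_pow_eq_monomial, C_mul_monomial, monomial_mul, mul_one]
  refine congrArg (monomial · c) (Finsupp.ext fun k => ?_)
  fin_cases k <;> simp [bidegExp]

lemma monomial_bidegExp_mem_V33 (i j : Fin 4) (r : ℂ) : monomial (bidegExp i j) r ∈ V33 := by
  constructor <;> refine isWeightedHomogeneous_monomial _ _ _ ?_ <;>
    simp [Finsupp.weight_apply, Finsupp.sum_fintype, Fin.sum_univ_four, wx, wy, bidegExp] <;>
    omega

lemma exists_bidegExp_of_mem_support {f : P4} (hf : f ∈ V33) {m : Fin 4 →₀ ℕ}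
    (hm : m ∈ f.support) : ∃ ij : Fin 4 × Fin 4, bidegExp ij.1 ij.2 = m := by
  have hx : m 0 + m 1 = 3 := by
    simpa [Finsupp.weight_apply, Finsupp.sum_fintype, Fin.sum_univ_four, wx] using
      hf.1 (mem_support_iff.1 hm)
  have hy : m 2 + m 3 = 3 := by
    simpa [Finsupp.weight_apply, Finsupp.sum_fintype, Fin.sum_univ_four, wy] using
      hf.2 (mem_support_iff.1 hm)
  refine ⟨(⟨m 1, by omega⟩, ⟨m 3, by omega⟩), Finsupp.ext fun k => ?_⟩
  fin_cases k <;> simp [bidegExp] <;> omega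

def bidegForm (c : Fin 4 → Fin 4 → ℂ) : P4 :=
  ∑ i : Fin 4, ∑ j : Fin 4, monomial (bidegExp i j) (c i j)

lemma eq_bidegForm {f : P4} (hf : f ∈ V33) :
    f = bidegForm fun i j => coeff (bidegExp i j) f := by
  classical
  conv_lhs => rw [as_sum f]
  rw [bidegForm, ← Finset.sum_product',
    ← Finset.sum_image (g := fun ij : Fin 4 × Fin 4 => bidegExp ij.1 ij.2)
      (f := fun m => monomial m (coeff m f)) bidegExp_injective.injOn]
  refine Finset.sum_subset (fun m hm => ?_) (fun m _ hm => by simp [notMem_support_iff.1 hm])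
  obtain ⟨ij, rfl⟩ := exists_bidegExp_of_mem_support hf hm
  exact Finset.mem_image_of_mem _ (Finset.mem_univ _)

end Bidegree

section NormalForm

def binaryCubic {R : Type*} [CommRing R] (c : Fin 4 → R) (y : Fin 2 → R) : R :=
  ∑ j : Fin 4, c j * y 0 ^ (3 - (j : ℕ)) * y 1 ^ (j : ℕ)

lemma binaryCubic_eq_zero {K : Type*} [Field K] [NeZero (2 : K)] {c : Fin 4 → K}
    (h : ∀ y : Fin 2 → K, y ≠ 0 → binaryCubic c y = 0) : c = 0 := by
  have h₁ := h ![1, 0] (by simp)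
  have h₂ := h ![0, 1] (by simp)
  have h₃ := h ![1, 1] (by simp)
  have h₄ := h ![1, -1] (by simp)
  simp [binaryCubic, Fin.sum_univ_four] at h₁ h₂ h₃ h₄
  have hc₂ : c 2 = 0 := by
    have : (2 : K) * c 2 = 0 := by linear_combination h₃ + h₄ - 2 * h₁
    exact (mul_eq_zero.1 this).resolve_left two_ne_zero
  have hc₁ : c 1 = 0 := by linear_combination h₃ - h₁ - h₂ - hc₂
  ext j
  fin_cases j
  exacts [h₁, hc₁, hc₂, h₂]

lemma eval_pderiv_zero_pt_one_zero (c : Fin 4 → Fin 4 → ℂ) (y : Fin 2 → ℂ) :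
    eval (pt ![1, 0] y) (pderiv 0 (bidegForm c)) = 3 * binaryCubic (c 0) y := by
  simp [bidegForm, binaryCubic, Fin.sum_univ_four, monomial_bidegExp, pderiv_X, pt]
  ring

lemma eval_pderiv_one_pt_one_zero (c : Fin 4 → Fin 4 → ℂ) (y : Fin 2 → ℂ) :
    eval (pt ![1, 0] y) (pderiv 1 (bidegForm c)) = binaryCubic (c 1) y := by
  simp [bidegForm, binaryCubic, Fin.sum_univ_four, monomial_bidegExp, pderiv_X, pt]
  ring

lemma eval_pderiv_pt_zero_one (c : Fin 4 → Fin 4 → ℂ) :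
    eval (pt ![0, 1] ![1, 0]) (pderiv 0 (bidegForm c)) = c 2 0 ∧
    eval (pt ![0, 1] ![1, 0]) (pderiv 1 (bidegForm c)) = 3 * c 3 0 ∧
    eval (pt ![0, 1] ![1, 0]) (pderiv 3 (bidegForm c)) = c 3 1 := by
  simp [bidegForm, Fin.sum_univ_four, monomial_bidegExp, pderiv_X, pt]
  ring

def normalFormExps : Finset (Fin 4 × Fin 4) := {(2, 1), (2, 2), (2, 3), (3, 2), (3, 3)}

lemma V33_inf_singularSubmodule_le_restrictSupport :
    V33 ⊓ singularSubmodule (insert (pt ![0, 1] ![1, 0]) (firstRulingLine ![1, 0])) ≤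
      restrictSupport ℂ ((fun ij : Fin 4 × Fin 4 => bidegExp ij.1 ij.2) '' normalFormExps) := by
  intro f hfS
  obtain ⟨hV, hS⟩ := Submodule.mem_inf.1 hfS
  rw [mem_singularSubmodule] at hS
  obtain ⟨c, hc⟩ : ∃ c : Fin 4 → Fin 4 → ℂ, c = fun i j : Fin 4 => coeff (bidegExp i j) f :=
    ⟨_, rfl⟩
  have hf : f = bidegForm c := hc ▸ eq_bidegForm hV
  have hline (y : Fin 2 → ℂ) (hy : y ≠ 0) (k : Fin 4) : eval (pt ![1, 0] y) (pderiv k f) = 0 :=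
    hS _ (Or.inr ⟨y, hy, rfl⟩) k
  have hc₀ : c 0 = 0 := binaryCubic_eq_zero fun y hy => by
    simpa [hf, eval_pderiv_zero_pt_one_zero] using hline y hy 0
  have hc₁ : c 1 = 0 := binaryCubic_eq_zero fun y hy => by
    simpa [hf, eval_pderiv_one_pt_one_zero] using hline y hy 1
  have hq (k : Fin 4) : eval (pt ![0, 1] ![1, 0]) (pderiv k (bidegForm c)) = 0 :=
    hf ▸ hS _ (Or.inl rfl) k
  obtain ⟨h₂₀, h₃₀, h₃₁⟩ := eval_pderiv_pt_zero_one c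
  rw [hq] at h₂₀ h₃₀ h₃₁
  replace h₃₀ : c 3 0 = 0 := by simpa using h₃₀.symm
  intro m hm
  obtain ⟨⟨i, j⟩, rfl⟩ := exists_bidegExp_of_mem_support hV hm
  refine ⟨(i, j), ?_, rfl⟩
  have hij : c i j ≠ 0 := hc ▸ mem_support_iff.1 hm
  revert hij
  fin_cases i <;> fin_cases j <;> simp [normalFormExps, hc₀, hc₁, ← h₂₀, h₃₀, ← h₃₁]

lemma restrictSupport_le_V33_inf_singularSubmodule :
    restrictSupport ℂ ((fun ij : Fin 4 × Fin 4 => bidegExp ij.1 ij.2) '' normalFormExps) ≤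
      V33 ⊓ singularSubmodule (insert (pt ![0, 1] ![1, 0]) (firstRulingLine ![1, 0])) := by
  rw [restrictSupport_eq_span, Submodule.span_le]
  rintro _ ⟨_, ⟨⟨i, j⟩, hij, rfl⟩, rfl⟩
  refine ⟨monomial_bidegExp_mem_V33 i j 1, mem_singularSubmodule.2 ?_⟩
  simp only [normalFormExps, Finset.coe_insert, Finset.coe_singleton, Set.mem_insert_iff,
    Set.mem_singleton_iff, Prod.mk.injEq] at hij
  rintro p (rfl | ⟨y, -, rfl⟩) k <;>
    rcases hij with ⟨rfl, rfl⟩ | ⟨rfl, rfl⟩ | ⟨rfl, rfl⟩ | ⟨rfl, rfl⟩ | ⟨rfl, rfl⟩ <;>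
    fin_cases k <;> simp [monomial_bidegExp, pderiv_X, pt]

lemma finrank_V33_inf_singularSubmodule_normalForm :
    Module.finrank ℂ
      ↥(V33 ⊓ singularSubmodule (insert (pt ![0, 1] ![1, 0]) (firstRulingLine ![1, 0]))) = 5 := by
  rw [le_antisymm V33_inf_singularSubmodule_le_restrictSupport
      restrictSupport_le_V33_inf_singularSubmodule,
    Module.finrank_eq_nat_card_basis (basisRestrictSupport ℂ _),
    Nat.card_image_of_injective bidegExp_injective, Nat.card_coe_set_eq, Set.ncard_coe_finset]
  rfl

end NormalForm

lemma coe_V33_inf_singularSubmodule (a₀ a₁ : ℂ) (q : Fin 4 → ℂ) :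
    (↑(V33 ⊓ singularSubmodule (insert q (firstRulingLine ![a₀, a₁]))) : Set P4) =
      {f : P4 | f ∈ V33 ∧
        (∀ b₀ b₁ : ℂ, ¬(b₀ = 0 ∧ b₁ = 0) → SingularAt f ![a₀, a₁, b₀, b₁]) ∧
        SingularAt f q} := by
  ext f
  simp only [SetLike.mem_coe, Submodule.mem_inf, mem_singularSubmodule, Set.forall_mem_insert,
    firstRulingLine, Set.forall_mem_image, Set.mem_compl_singleton_iff, Set.mem_ofPred_eq]
  rw [forall_ne_zero_fin_two_iff, and_comm (a := ∀ i, _)]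
  rfl

/-- Fix `(a₀,a₁) ∈ ℂ² ∖ {0}`, let `L` be the ruling line of points of `P¹ × P¹` with first
coordinate `[a₀ : a₁]`, and let `q` be a point of `P¹ × P¹` not lying on `L`. The set of forms
`f ∈ V` singular at every point of `L` and also singular at `q` is a complex linear subspace
of `V` of dimension `5` (codimension 11). -/
theorem singular_along_line_and_at_point_codim_eleven
    (a₀ a₁ : ℂ) (ha : ¬(a₀ = 0 ∧ a₁ = 0))
    (q : Fin 4 → ℂ) (hq : IsRep q)
    (hqL : ¬ ∃ l : ℂˣ, q 0 = l * a₀ ∧ q 1 = l * a₁) :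
    ∃ S : Submodule ℂ P4,
      (S : Set P4) = {f : P4 | f ∈ V33 ∧
        (∀ b₀ b₁ : ℂ, ¬(b₀ = 0 ∧ b₁ = 0) → SingularAt f ![a₀, a₁, b₀, b₁]) ∧
        SingularAt f q} ∧
      Module.finrank ℂ S = 5 := by
  obtain ⟨v₀, v₁, hv⟩ := exists_det_ne_zero hq.2
  let A := ((Matrix.isUnit_iff_isUnit_det !![a₀, q 0; a₁, q 1]).2
    (by simpa using (det_ne_zero_of_not_proportional ha hq.1 hqL).isUnit)).unit
  let B := ((Matrix.isUnit_iff_isUnit_det !![q 2, v₀; q 3, v₁]).2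
    (by simpa using hv.isUnit)).unit
  have hK : ((blockDiagonal₂Unit A B : Matrix (Fin 4) (Fin 4) ℂ) *ᵥ ·) ''
      insert (pt ![0, 1] ![1, 0]) (firstRulingLine ![1, 0]) =
        insert q (firstRulingLine ![a₀, a₁]) := by
    rw [Set.image_insert_eq, image_blockDiagonal₂Unit_firstRulingLine, coe_blockDiagonal₂Unit,
      blockDiagonal₂_mulVec_pt]
    congr 1
    · ext i; fin_cases i <;> simp [A, B, pt]
    · congr 1; ext i; fin_cases i <;> simp [A]
  refine ⟨V33 ⊓ singularSubmodule (insert q (firstRulingLine ![a₀, a₁])),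
    coe_V33_inf_singularSubmodule a₀ a₁ q, ?_⟩
  rw [← hK, ← comap_linSubst_singularSubmodule, ← comap_linSubst_blockDiagonal₂Unit_V33 A B,
    ← Submodule.comap_inf, finrank_comap_linSubst, finrank_V33_inf_singularSubmodule_normalForm]

end
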